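/- Let k : [0,2]×[0,1] → ℂ be bounded measurable with |k| ≤ k_max and let F be the kernel-based autoconvolution operator. Then for all x, h ∈ L²_ℂ(0,1), ‖F(x+h) − F(x) − F′(x)h‖_{L²_ℂ(0,2)} ≤ √2 · k_max · ‖h‖²_{L²_ℂ(0,1)}, where [F′(x)h](s) = ∫₀ˢ (k(s,q)+k(s,s−q))x(s−q)h(q)dq. -/

import Mathlib

/-!
Expanding `F(x+h)` bilinearly, the substitution `q ↦ s - q` turns the cross term
`∫ k(s,q) h(s-q) x(q) dq` into `∫ k(s,s-q) x(s-q) h(q) dq`, so the remainder is exactly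
`∫₀ˢ k(s,q) h(s-q) h(q) dq`. By AM–GM and translation invariance of Lebesgue measure,
`∫ |h(s-q)| |h(q)| dq ≤ ‖h‖²`, so the remainder is bounded by `k_max ‖h‖²` pointwise
in `s`; integrating this constant bound over `(0,2]` gives the factor `√2`.
-/

open MeasureTheory Set

section

variable {α E : Type*} [MeasurableSpace α] {μ : Measure α} [NormedAddCommGroup E]

theorem MeasureTheory.MemLp.of_restrict_of_eq_zero_off {f : α → E} {p : ENNReal} {s : Set α}
    (hs : MeasurableSet s) (hf : MemLp f p (μ.restrict s)) (hf0 : ∀ t ∉ s, f t = 0) :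
    MemLp f p μ := by
  rw [← indicator_eq_self.mpr (fun t ht => by_contra fun hts => ht (hf0 t hts)),
    memLp_indicator_iff_restrict hs]
  exact hf

theorem MeasureTheory.MemLp.integrable_bdd_mul_mul {𝕜 : Type*} [NormedRing 𝕜]
    {K f g : α → 𝕜} {C : ℝ} (hf : MemLp f 2 μ) (hg : MemLp g 2 μ)
    (hK : AEStronglyMeasurable K μ) (hKb : ∀ᵐ q ∂μ, ‖K q‖ ≤ C) :
    Integrable (fun q => K q * f q * g q) μ := by
  simpa only [mul_assoc, Pi.mul_apply] using (hf.integrable_mul hg).bdd_mul hK hKb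

end

section

variable {G E : Type*} [MeasurableSpace G] [AddGroup G] [MeasurableAdd G] [MeasurableNeg G]
  {μ : Measure G} [μ.IsAddLeftInvariant] [μ.IsNegInvariant] [NormedAddCommGroup E]

theorem MeasureTheory.MemLp.comp_sub_left {f : G → E} {p : ENNReal} (hf : MemLp f p μ)
    (s : G) : MemLp (fun q => f (s - q)) p μ :=
  hf.comp_measurePreserving (Measure.measurePreserving_sub_left μ s)

theorem integral_norm_mul_norm_sub_le {h : G → E} (hh : MemLp h 2 μ) (s : G) :
    ∫ q, ‖h (s - q)‖ * ‖h q‖ ∂μ ≤ ∫ q, ‖h q‖ ^ 2 ∂μ := by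
  have hsq : Integrable (fun q => ‖h q‖ ^ 2) μ := hh.integrable_norm_pow two_ne_zero
  have hsq_refl : Integrable (fun q => ‖h (s - q)‖ ^ 2) μ := hsq.comp_sub_left s
  calc ∫ q, ‖h (s - q)‖ * ‖h q‖ ∂μ
      ≤ ∫ q, (‖h (s - q)‖ ^ 2 + ‖h q‖ ^ 2) / 2 ∂μ :=
        integral_mono_of_nonneg (ae_of_all _ fun _ => by positivity)
          ((hsq_refl.add hsq).div_const 2)
          (ae_of_all _ fun q => by nlinarith [sq_nonneg (‖h (s - q)‖ - ‖h q‖)])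
    _ = ∫ q, ‖h q‖ ^ 2 ∂μ := by
        rw [integral_div, integral_add hsq_refl hsq,
          integral_sub_left_eq_self (fun q => ‖h q‖ ^ 2) μ s]
        ring

end

theorem setIntegral_Ioc_comp_sub_left {E : Type*} [NormedAddCommGroup E] [NormedSpace ℝ E]
    (f : ℝ → E) (s : ℝ) : ∫ q in Ioc 0 s, f (s - q) = ∫ q in Ioc 0 s, f q := by
  rcases le_or_gt 0 s with hs | hs
  · simpa [intervalIntegral.integral_of_le hs] using
      intervalIntegral.integral_comp_sub_left f (a := 0) (b := s) s
  · simp [Ioc_eq_empty_of_le hs.le]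

theorem sqrt_setIntegral_norm_sq_le {E : Type*} [NormedAddCommGroup E] {F : ℝ → E}
    {a b M : ℝ} (hab : a ≤ b) (hM : 0 ≤ M) (hF : ∀ s, ‖F s‖ ≤ M) :
    √(∫ s in Ioc a b, ‖F s‖ ^ 2) ≤ √(b - a) * M := by
  have hle : ∫ s in Ioc a b, ‖F s‖ ^ 2 ≤ ∫ _ in Ioc a b, M ^ 2 :=
    integral_mono_of_nonneg (ae_of_all _ fun _ => by positivity) (integrableOn_const (by simp))
      (ae_of_all _ fun s => pow_le_pow_left₀ (norm_nonneg _) (hF s) 2)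
  rw [setIntegral_const, Real.volume_real_Ioc_of_le hab, smul_eq_mul] at hle
  calc √(∫ s in Ioc a b, ‖F s‖ ^ 2) ≤ √((b - a) * M ^ 2) := Real.sqrt_le_sqrt hle
    _ = √(b - a) * M := by rw [Real.sqrt_mul (by linarith), Real.sqrt_sq hM]

section

variable {K x h : ℝ → ℂ} {C : ℝ}

theorem setIntegral_quadratic_remainder (hKm : Measurable K) (hKb : ∀ q, ‖K q‖ ≤ C)
    (hx : MemLp x 2 volume) (hh : MemLp h 2 volume) (s : ℝ) :
    (∫ q in Ioc 0 s, K q * (x (s - q) + h (s - q)) * (x q + h q))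
      - (∫ q in Ioc 0 s, K q * x (s - q) * x q)
      - (∫ q in Ioc 0 s, (K q + K (s - q)) * x (s - q) * h q)
      = ∫ q in Ioc 0 s, K q * h (s - q) * h q := by
  have hint : ∀ {L f g : ℝ → ℂ}, Measurable L → (∀ q, ‖L q‖ ≤ C) →
      MemLp f 2 volume → MemLp g 2 volume →
      Integrable (fun q => L q * f q * g q) (volume.restrict (Ioc 0 s)) :=
    fun hL hLb hf hg =>
      (hf.integrable_bdd_mul_mul hg hL.aestronglyMeasurable (ae_of_all _ hLb)).integrableOn
  have hxs := hx.comp_sub_left s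
  have hhs := hh.comp_sub_left s
  have hKs : Measurable fun q => K (s - q) := hKm.comp (measurable_const.sub measurable_id)
  have hrefl : ∫ q in Ioc 0 s, K (s - q) * x (s - q) * h q
      = ∫ q in Ioc 0 s, K q * x q * h (s - q) := by
    simpa only [sub_sub_cancel] using
      setIntegral_Ioc_comp_sub_left (fun q => K q * x q * h (s - q)) s
  have hquad : Integrable (fun q => K q * (x (s - q) + h (s - q)) * (x q + h q))
      (volume.restrict (Ioc 0 s)) := hint hKm hKb (hxs.add hhs) (hx.add hh)
  have hsum : Integrable (fun q => K q * (x (s - q) + h (s - q)) * (x q + h q)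
      - K q * x (s - q) * x q) (volume.restrict (Ioc 0 s)) := hquad.sub (hint hKm hKb hxs hx)
  have hlin : Integrable (fun q => K q * x (s - q) * h q + K q * x q * h (s - q))
      (volume.restrict (Ioc 0 s)) := (hint hKm hKb hxs hh).add (hint hKm hKb hx hhs)
  rw [show (fun q => (K q + K (s - q)) * x (s - q) * h q)
      = fun q => K q * x (s - q) * h q + K (s - q) * x (s - q) * h q by ext; ring,
    integral_add (hint hKm hKb hxs hh) (hint hKs (fun q => hKb _) hxs hh), hrefl,
    ← integral_add (hint hKm hKb hxs hh) (hint hKm hKb hx hhs),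
    ← integral_sub hquad (hint hKm hKb hxs hx),
    ← integral_sub hsum hlin]
  exact integral_congr_ae (ae_of_all _ fun q => by ring)

theorem norm_setIntegral_kernel_mul_le (hKb : ∀ q, ‖K q‖ ≤ C) (hh : MemLp h 2 volume)
    (s : ℝ) :
    ‖∫ q in Ioc 0 s, K q * h (s - q) * h q‖ ≤ C * ∫ q, ‖h q‖ ^ 2 := by
  have hC : 0 ≤ C := (norm_nonneg _).trans (hKb 0)
  have hprod : Integrable (fun q => ‖h (s - q)‖ * ‖h q‖) volume :=
    (hh.comp_sub_left s).norm.integrable_mul hh.norm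
  calc ‖∫ q in Ioc 0 s, K q * h (s - q) * h q‖
      ≤ ∫ q in Ioc 0 s, C * (‖h (s - q)‖ * ‖h q‖) :=
        norm_integral_le_of_norm_le (hprod.const_mul C).integrableOn (ae_of_all _ fun q => by
          rw [norm_mul, norm_mul, mul_assoc]
          exact mul_le_mul_of_nonneg_right (hKb q) (by positivity))
    _ = C * ∫ q in Ioc 0 s, ‖h (s - q)‖ * ‖h q‖ := integral_const_mul _ _
    _ ≤ C * ∫ q, ‖h (s - q)‖ * ‖h q‖ :=
        mul_le_mul_of_nonneg_left (setIntegral_le_integral hprod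
          (ae_of_all _ fun _ => by positivity)) hC
    _ ≤ C * ∫ q, ‖h q‖ ^ 2 :=
        mul_le_mul_of_nonneg_left (integral_norm_mul_norm_sub_le hh s) hC

end

theorem stmt13_general (k : ℝ → ℝ → ℂ) (kmax : ℝ)
    (hkm : Measurable (Function.uncurry k))
    (hkb : ∀ s q : ℝ, ‖k s q‖ ≤ kmax)
    (x h : ℝ → ℂ)
    (hx : MemLp x 2 (volume.restrict (Ioc (0:ℝ) 1)))
    (hh : MemLp h 2 (volume.restrict (Ioc (0:ℝ) 1)))
    (hx0 : ∀ t : ℝ, t ∉ Icc (0:ℝ) 1 → x t = 0)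
    (hh0 : ∀ t : ℝ, t ∉ Icc (0:ℝ) 1 → h t = 0) :
    Real.sqrt (∫ s in Ioc (0:ℝ) 2,
        ‖(∫ q in Ioc (0:ℝ) s, k s q * (x (s - q) + h (s - q)) * (x q + h q))
          - (∫ q in Ioc (0:ℝ) s, k s q * x (s - q) * x q)
          - (∫ q in Ioc (0:ℝ) s, (k s q + k s (s - q)) * x (s - q) * h q)‖^2)
      ≤ Real.sqrt 2 * kmax * (∫ q in Ioc (0:ℝ) 1, ‖h q‖^2) := by
  rw [Measure.restrict_congr_set Ioc_ae_eq_Icc] at hx hh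
  have hX : MemLp x 2 volume := hx.of_restrict_of_eq_zero_off measurableSet_Icc hx0
  have hH : MemLp h 2 volume := hh.of_restrict_of_eq_zero_off measurableSet_Icc hh0
  have hnorm : ∫ q in Ioc 0 1, ‖h q‖ ^ 2 = ∫ q, ‖h q‖ ^ 2 := by
    rw [← integral_Icc_eq_integral_Ioc,
      setIntegral_eq_integral_of_forall_compl_eq_zero fun t ht => by simp [hh0 t ht]]
  have hslice (s : ℝ) : Measurable (k s) := hkm.comp measurable_prodMk_left
  have hbound : 0 ≤ kmax * ∫ q, ‖h q‖ ^ 2 :=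
    mul_nonneg ((norm_nonneg _).trans (hkb 0 0)) (integral_nonneg fun _ => by positivity)
  calc _ ≤ √(2 - 0) * (kmax * ∫ q, ‖h q‖ ^ 2) :=
        sqrt_setIntegral_norm_sq_le (by norm_num) hbound fun s => by
          rw [setIntegral_quadratic_remainder (hslice s) (hkb s) hX hH s]
          exact norm_setIntegral_kernel_mul_le (hkb s) hH s
    _ = _ := by rw [hnorm, sub_zero, mul_assoc]

/-- Quadratic remainder estimate: for bounded measurable kernel `|k| ≤ k_max`,
`‖F(x+h) − F(x) − F'(x)h‖_{L²(0,2)} ≤ √2 k_max ‖h‖²_{L²(0,1)}`. -/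
theorem stmt13 (k : ℝ → ℝ → ℂ) (kmax : ℝ)
    (hkm : Measurable (Function.uncurry k))
    (hkb : ∀ s q : ℝ, ‖k s q‖ ≤ kmax)
    (x h : ℝ → ℂ)
    (hxm : AEStronglyMeasurable x volume) (hhm : AEStronglyMeasurable h volume)
    (hx : MemLp x 2 (volume.restrict (Ioc (0:ℝ) 1)))
    (hh : MemLp h 2 (volume.restrict (Ioc (0:ℝ) 1)))
    (hx0 : ∀ t : ℝ, t ∉ Icc (0:ℝ) 1 → x t = 0)
    (hh0 : ∀ t : ℝ, t ∉ Icc (0:ℝ) 1 → h t = 0) :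
    Real.sqrt (∫ s in Ioc (0:ℝ) 2,
        ‖(∫ q in Ioc (0:ℝ) s, k s q * (x (s - q) + h (s - q)) * (x q + h q))
          - (∫ q in Ioc (0:ℝ) s, k s q * x (s - q) * x q)
          - (∫ q in Ioc (0:ℝ) s, (k s q + k s (s - q)) * x (s - q) * h q)‖^2)
      ≤ Real.sqrt 2 * kmax * (∫ q in Ioc (0:ℝ) 1, ‖h q‖^2) :=
  stmt13_general k kmax hkm hkb x h hx hh hx0 hh0
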